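/- arXiv:2310.20266 — 4 statements merged into one kernel-verified Lean document; each statement's English description precedes it below -/
import Mathlib

section
/- Let f: ℝ → ℝ be twice continuously differentiable with f'(x) ≠ 0 for all x, and let φ: ℝ → ℝ be twice differentiable with φ(0) = 0, such that for all x, h ∈ ℝ, (f(x) + f(x+h))/2 = f(x + φ(h)). Then either f is affine (f(x) = a·x + b) or f is an affine transform of an exponential (f(x) = c₁·exp(β·x) + c₂ for some β ≠ 0). -/
/-!
Differentiating the equation in `h` gives `f' (x + h) / 2 = f' (x + φ h) * φ' h`. At `x = h = 0`
this forces `φ' 0 = 1 / 2`, and differentiating once more at `h = 0` yields the linear ODE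
`f'' = β f'` with `β = 4 φ'' 0`. Hence `f'` is a multiple of `exp (β x)`, and integrating gives an
affine `f` when `β = 0` and an affine transform of `exp (β x)` otherwise.
-/

open Real

theorem eq_of_hasDerivAt_eq {f g f' : ℝ → ℝ} (hf : ∀ x, HasDerivAt f (f' x) x)
    (hg : ∀ x, HasDerivAt g (f' x) x) (h₀ : f 0 = g 0) : f = g :=
  eq_of_fderiv_eq (fun x => (hf x).differentiableAt) (fun x => (hg x).differentiableAt)
    (fun x => by rw [(hf x).hasFDerivAt.fderiv, (hg x).hasFDerivAt.fderiv]) 0 h₀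

theorem eq_mul_exp_of_hasDerivAt_mul {u : ℝ → ℝ} {β : ℝ}
    (hu : ∀ x, HasDerivAt u (β * u x) x) (x : ℝ) : u x = u 0 * exp (β * x) := by
  have hw : ∀ y, HasDerivAt (fun y => u y * exp (-β * y)) 0 y := fun y => by
    have hexp : HasDerivAt (fun y => exp (-β * y)) (exp (-β * y) * -β) y := by
      simpa using ((hasDerivAt_id y).const_mul (-β)).exp
    exact ((hu y).mul hexp).congr_deriv (by ring)
  have hconst := congrFun (eq_of_hasDerivAt_eq hw (fun _ => hasDerivAt_const _ (u 0))
    (by simp)) x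
  calc u x = u x * exp (-β * x) * exp (β * x) := by
        rw [mul_assoc, ← exp_add]; simp
    _ = u 0 * exp (β * x) := by rw [hconst]

theorem affine_or_exp_of_hasDerivAt_deriv_eq_mul {f g : ℝ → ℝ} {β : ℝ}
    (hf : ∀ x, HasDerivAt f (g x) x) (hg : ∀ x, HasDerivAt g (β * g x) x) :
    (∃ a b : ℝ, ∀ x, f x = a * x + b) ∨
    (∃ c₁ c₂ γ : ℝ, γ ≠ 0 ∧ ∀ x, f x = c₁ * exp (γ * x) + c₂) := by
  have hg_exp := eq_mul_exp_of_hasDerivAt_mul hg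
  rcases eq_or_ne β 0 with rfl | hβ
  · refine .inl ⟨g 0, f 0, congrFun (eq_of_hasDerivAt_eq hf (fun x => ?_) (by simp))⟩
    simpa [hg_exp x] using ((hasDerivAt_id x).const_mul (g 0)).add_const (f 0)
  · refine .inr ⟨g 0 / β, f 0 - g 0 / β, β, hβ,
      congrFun (eq_of_hasDerivAt_eq hf (fun x => ?_) (by simp))⟩
    have hexp : HasDerivAt (fun x => exp (β * x)) (exp (β * x) * β) x := by
      simpa using ((hasDerivAt_id x).const_mul β).exp
    refine ((hexp.const_mul (g 0 / β)).add_const (f 0 - g 0 / β)).congr_deriv ?_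
    rw [hg_exp x]
    field_simp

section MidpointEquation

variable {f φ : ℝ → ℝ} (heq : ∀ x h : ℝ, (f x + f (x + h)) / 2 = f (x + φ h))
include heq

theorem deriv_add_div_two_eq (hf : Differentiable ℝ f) (hφ : Differentiable ℝ φ) (x h : ℝ) :
    deriv f (x + h) / 2 = deriv f (x + φ h) * deriv φ h := by
  have hmid : HasDerivAt (fun h => (f x + f (x + h)) / 2) (deriv f (x + h) / 2) h := by
    simpa using (((hf (x + h)).hasDerivAt.comp h
      ((hasDerivAt_id h).const_add x)).const_add (f x)).div_const 2
  have hcomp : HasDerivAt (fun h => f (x + φ h)) (deriv f (x + φ h) * deriv φ h) h :=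
    (hf (x + φ h)).hasDerivAt.comp h ((hφ h).hasDerivAt.const_add x)
  exact (hmid.congr_of_eventuallyEq (.of_forall fun h => (heq x h).symm)).unique hcomp

theorem deriv_zero_eq_half (hf : Differentiable ℝ f) (hφ : Differentiable ℝ φ) (hφ0 : φ 0 = 0)
    (hf'0 : deriv f 0 ≠ 0) : deriv φ 0 = 1 / 2 := by
  have h := deriv_add_div_two_eq heq hf hφ 0 0
  simp only [add_zero, hφ0] at h
  apply mul_left_cancel₀ hf'0
  linarith

theorem deriv_deriv_eq_mul (hf : Differentiable ℝ f) (hf₂ : Differentiable ℝ (deriv f))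
    (hφ : Differentiable ℝ φ) (hφ₂ : DifferentiableAt ℝ (deriv φ) 0) (hφ0 : φ 0 = 0)
    (hf'0 : deriv f 0 ≠ 0) (x : ℝ) :
    deriv (deriv f) x = 4 * deriv (deriv φ) 0 * deriv f x := by
  have hφ'0 := deriv_zero_eq_half heq hf hφ hφ0 hf'0
  have hlhs : HasDerivAt (fun h => deriv f (x + h) / 2) (deriv (deriv f) x / 2) 0 := by
    simpa using ((hf₂ (x + 0)).hasDerivAt.comp 0 ((hasDerivAt_id 0).const_add x)).div_const 2
  have hrhs : HasDerivAt (fun h => deriv f (x + φ h) * deriv φ h)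
      (deriv (deriv f) x * (1 / 2) * (1 / 2) + deriv f x * deriv (deriv φ) 0) 0 := by
    have := ((hf₂ (x + φ 0)).hasDerivAt.comp 0 ((hφ 0).hasDerivAt.const_add x)).mul
      hφ₂.hasDerivAt
    exact this.congr_deriv (by simp [hφ0, hφ'0])
  have hderiv := (hlhs.congr_of_eventuallyEq
    (.of_forall fun h => (deriv_add_div_two_eq heq hf hφ x h).symm)).unique hrhs
  linarith

end MidpointEquation

/-- The core functional-equation argument: if the f-midpoint of `x` and `x+h` is
`f (x + φ h)` for all `x, h`, with `f` twice continuously differentiable with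
nonvanishing derivative and `φ` twice differentiable with `φ 0 = 0`, then `f`
is affine or an affine transform of an exponential. -/
theorem bellman_utility_affine_or_exponential
    (f φ : ℝ → ℝ)
    (hf : ContDiff ℝ 2 f)
    (hf' : ∀ x, deriv f x ≠ 0)
    (hφ : Differentiable ℝ φ)
    (hφ' : Differentiable ℝ (deriv φ))
    (hφ0 : φ 0 = 0)
    (heq : ∀ x h : ℝ, (f x + f (x + h)) / 2 = f (x + φ h)) :
    (∃ a b : ℝ, ∀ x, f x = a * x + b) ∨
    (∃ c₁ c₂ β : ℝ, β ≠ 0 ∧ ∀ x, f x = c₁ * Real.exp (β * x) + c₂) := by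
  have hf₁ : Differentiable ℝ f := hf.differentiable two_ne_zero
  have hf₂ : Differentiable ℝ (deriv f) := hf.differentiable_deriv_two
  refine affine_or_exp_of_hasDerivAt_deriv_eq_mul (g := deriv f) (β := 4 * deriv (deriv φ) 0)
    (fun x => (hf₁ x).hasDerivAt) (fun x => ?_)
  rw [← deriv_deriv_eq_mul heq hf₁ hf₂ hφ (hφ' 0) hφ0 (hf' 0) x]
  exact (hf₂ x).hasDerivAt
end

section
/- Let f: ℝ → ℝ and φ: ℝ → ℝ satisfy (f(x) + f(x+h))/2 = f(x + φ(h)) for all x, h, with f twice differentiable, φ twice differentiable, φ(0) = 0 and φ'(0) = 1/2. Then for all x, (1/4)·f''(x) = φ''(0)·f'(x). -/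
/-! Differentiating the functional equation in `h` gives `f'(x+h)/2 = f'(x+φ h) φ'(h)` for every `h`;
differentiating once more and evaluating at `h = 0`, where `φ 0 = 0` and `φ' 0 = 1/2`, gives
`f''(x)/2 = f''(x)/4 + f'(x) φ''(0)`. -/

lemma deriv_midpoint_eq {f φ : ℝ → ℝ} {x : ℝ} (hf : Differentiable ℝ f)
    (hφ : Differentiable ℝ φ) (heq : ∀ h, (f x + f (x + h)) / 2 = f (x + φ h)) (h : ℝ) :
    deriv f (x + h) / 2 = deriv f (x + φ h) * deriv φ h := by
  have hlhs : HasDerivAt (fun h => (f x + f (x + h)) / 2) (deriv f (x + h) / 2) h := by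
    simpa using (((hf (x + h)).hasDerivAt.comp_const_add x h).const_add (f x)).div_const 2
  have hrhs : HasDerivAt (fun h => f (x + φ h)) (deriv f (x + φ h) * deriv φ h) h :=
    (hf (x + φ h)).hasDerivAt.comp h ((hφ h).hasDerivAt.const_add x)
  rw [funext heq] at hlhs
  exact hlhs.unique hrhs

lemma deriv_midpoint_eq_second_order {g φ : ℝ → ℝ} {x : ℝ} (hg : DifferentiableAt ℝ g x)
    (hφ : DifferentiableAt ℝ φ 0) (hφ2 : DifferentiableAt ℝ (deriv φ) 0) (hφ0 : φ 0 = 0)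
    (hφ'0 : deriv φ 0 = 1 / 2) (heq : ∀ h, g (x + h) / 2 = g (x + φ h) * deriv φ h) :
    (1 / 4) * deriv g x = deriv (deriv φ) 0 * g x := by
  have hlhs : HasDerivAt (fun h => g (x + h) / 2) (deriv g x / 2) 0 := by
    have hg0 : HasDerivAt g (deriv g x) (x + 0) := by simpa using hg.hasDerivAt
    simpa using (hg0.comp_const_add x 0).div_const 2
  have hinner : HasDerivAt (fun h => x + φ h) (deriv φ 0) 0 := hφ.hasDerivAt.const_add x
  have hgφ : DifferentiableAt ℝ g (x + φ 0) := by rwa [hφ0, add_zero]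
  have hrhs : HasDerivAt (fun h => g (x + φ h) * deriv φ h)
      (deriv g (x + φ 0) * deriv φ 0 * deriv φ 0 + g (x + φ 0) * deriv (deriv φ) 0) 0 :=
    (hgφ.hasDerivAt.comp 0 hinner).mul hφ2.hasDerivAt
  rw [funext heq] at hlhs
  have key := hlhs.unique hrhs
  rw [hφ0, hφ'0, add_zero] at key
  linarith

/-- Second-order differentiation of the midpoint functional equation at `h = 0`:
`(1/4) f''(x) = φ''(0) f'(x)` for all `x`. -/
theorem second_order_identity
    (f φ : ℝ → ℝ)
    (hf : Differentiable ℝ f)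
    (hf2 : Differentiable ℝ (deriv f))
    (hφ : Differentiable ℝ φ)
    (hφ2 : Differentiable ℝ (deriv φ))
    (hφ0 : φ 0 = 0)
    (hφ'0 : deriv φ 0 = 1 / 2)
    (heq : ∀ x h : ℝ, (f x + f (x + h)) / 2 = f (x + φ h)) :
    ∀ x : ℝ, (1 / 4) * deriv (deriv f) x = deriv (deriv φ) 0 * deriv f x := fun x =>
  deriv_midpoint_eq_second_order (hf2 x) (hφ 0) (hφ2 0) hφ0 hφ'0
    (deriv_midpoint_eq hf hφ (heq x))
end

section
/- Let μ be a probability measure on ℝ supported on an interval of length Δ, and let Π_Q μ = (1/N)·Σ_{i=0}^{N−1} δ_{z_i} be a quantile projection, where z_i = F⁻¹_μ((2i+1)/(2N)). Then W₁(Π_Q μ, μ) ≤ Δ/(2N). -/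
open MeasureTheory Set
open scoped ENNReal

/-- Cumulative distribution function of a measure on ℝ. -/
noncomputable def cdf (ν : Measure ℝ) (x : ℝ) : ℝ := (ν (Iic x)).toReal

/-- Quantile function (generalized inverse CDF) of a measure on ℝ. -/
noncomputable def quantile (ν : Measure ℝ) (u : ℝ) : ℝ := sInf {x | u ≤ cdf ν x}

/-- 1-Wasserstein distance on ℝ via quantile functions:
`W₁(ν₁, ν₂) = ∫₀¹ |F⁻¹_{ν₁}(u) − F⁻¹_{ν₂}(u)| du`. -/
noncomputable def W1 (ν₁ ν₂ : Measure ℝ) : ℝ :=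
  ∫ u in Ioo (0:ℝ) 1, |quantile ν₁ u - quantile ν₂ u|

/-!
The quantile function of the projection is the step function equal to `F⁻¹_μ((2i+1)/(2N))`
on `(i/N, (i+1)/N]`. As `F⁻¹_μ` is monotone, on each cell its L¹ distance to its value at the
midpoint is at most half the cell width times its increase across the cell, and these increases
telescope to at most `Δ`.
-/

section SupportedOnIcc

variable {μ : Measure ℝ} {a b : ℝ}

theorem cdf_eq_zero_of_lt (hsupp : μ (Icc a b)ᶜ = 0) {x : ℝ} (hx : x < a) : cdf μ x = 0 := by
  have : μ (Iic x) = 0 :=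
    measure_mono_null (fun y hy ↦ fun hy' ↦ (hx.trans_le hy'.1).not_ge hy) hsupp
  simp [cdf, this]

theorem cdf_right_eq_one [IsProbabilityMeasure μ] (hsupp : μ (Icc a b)ᶜ = 0) : cdf μ b = 1 := by
  have : μ (Iic b)ᶜ = 0 :=
    measure_mono_null (fun y hy ↦ fun hy' ↦ hy (mem_Iic.2 hy'.2)) hsupp
  simp [cdf, prob_compl_eq_zero_iff measurableSet_Iic |>.1 this]

theorem mem_lowerBounds_setOf_le_cdf (hsupp : μ (Icc a b)ᶜ = 0) {u : ℝ} (hu : 0 < u) :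
    a ∈ lowerBounds {x | u ≤ cdf μ x} := fun _ hx ↦
  not_lt.1 fun hxa ↦ (hu.trans_le hx).ne' (cdf_eq_zero_of_lt hsupp hxa)

variable [IsProbabilityMeasure μ]

theorem mapsTo_quantile_Icc (hsupp : μ (Icc a b)ᶜ = 0) :
    MapsTo (quantile μ) (Ioc 0 1) (Icc a b) := fun _ hu ↦
  ⟨le_csInf ⟨b, hu.2.trans (cdf_right_eq_one hsupp).ge⟩ (mem_lowerBounds_setOf_le_cdf hsupp hu.1),
    csInf_le ⟨a, mem_lowerBounds_setOf_le_cdf hsupp hu.1⟩ (hu.2.trans (cdf_right_eq_one hsupp).ge)⟩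

theorem quantile_monotoneOn (hsupp : μ (Icc a b)ᶜ = 0) : MonotoneOn (quantile μ) (Ioc 0 1) :=
  fun _ hu _ hv huv ↦ csInf_le_csInf ⟨a, mem_lowerBounds_setOf_le_cdf hsupp hu.1⟩
    ⟨b, hv.2.trans (cdf_right_eq_one hsupp).ge⟩ fun _ hx ↦ huv.trans hx

end SupportedOnIcc

section UniformAtoms

variable {N : ℕ} {z : ℕ → ℝ}

theorem lt_card_filter_le_iff (hz : MonotoneOn z (Iio N)) {i : ℕ} (hi : i < N) (x : ℝ) :
    i < ((Finset.range N).filter (z · ≤ x)).card ↔ z i ≤ x := by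
  constructor
  · intro hcard
    by_contra! hxz
    have hsub : (Finset.range N).filter (z · ≤ x) ⊆ Finset.range i := fun j hj ↦ by
      simp only [Finset.mem_filter, Finset.mem_range] at hj ⊢
      by_contra! hij
      exact (hxz.trans_le (hz hi hj.1 hij)).not_ge hj.2
    simpa using hcard.trans_le (Finset.card_le_card hsub)
  · intro hzx
    have hsub : Finset.range (i + 1) ⊆ (Finset.range N).filter (z · ≤ x) := fun j hj ↦ by
      simp only [Finset.mem_filter, Finset.mem_range] at hj ⊢
      have hjN : j < N := by omega
      exact ⟨hjN, (hz hjN hi (by omega)).trans hzx⟩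
    simpa using Finset.card_le_card hsub

theorem cdf_uniform_sum_dirac (x : ℝ) :
    cdf ((N : ℝ≥0∞)⁻¹ • ∑ j ∈ Finset.range N, Measure.dirac (z j)) x =
      ((Finset.range N).filter (z · ≤ x)).card / N := by
  simp [cdf, Measure.dirac_apply' _ measurableSet_Iic, indicator, Finset.sum_boole, div_eq_inv_mul]

theorem quantile_uniform_sum_dirac (hz : MonotoneOn z (Iio N)) {i : ℕ} (hi : i < N) :
    EqOn (quantile ((N : ℝ≥0∞)⁻¹ • ∑ j ∈ Finset.range N, Measure.dirac (z j))) (fun _ ↦ z i)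
      (Ioc (i / N) ((i + 1) / N)) := by
  rintro u ⟨hlo, hhi⟩
  have hN : (0 : ℝ) < N := by exact_mod_cast (Nat.zero_le i).trans_lt hi
  rw [div_lt_iff₀ hN] at hlo
  rw [le_div_iff₀ hN] at hhi
  show sInf _ = z i
  rw [← csInf_Ici (a := z i)]
  congr 1
  ext x
  change u ≤ cdf _ x ↔ z i ≤ x
  rw [cdf_uniform_sum_dirac, le_div_iff₀ hN, ← lt_card_filter_le_iff hz hi x]
  generalize ((Finset.range N).filter (z · ≤ x)).card = c
  constructor
  · intro h
    exact_mod_cast (show (i : ℝ) < c by linarith)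
  · intro h
    have : (i : ℝ) + 1 ≤ c := by exact_mod_cast Nat.add_one_le_iff.2 h
    linarith

end UniformAtoms

theorem Ioc_div_natCast_subset_Ioc_zero_one {N i : ℕ} (hi : i < N) :
    Ioc ((i : ℝ) / N) ((i + 1) / N) ⊆ Ioc 0 1 := fun _ hu ↦
  ⟨(by positivity : (0 : ℝ) ≤ i / N).trans_lt hu.1,
    hu.2.trans (div_le_one_of_le₀ (by exact_mod_cast hi) (Nat.cast_nonneg N))⟩

section MonotoneMidpoint

variable {g : ℝ → ℝ} {l r lo hi : ℝ}

theorem MonotoneOn.integrableOn_Ioc (hg : MonotoneOn g (Ioc l r))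
    (hb : MapsTo g (Ioc l r) (Icc lo hi)) : IntegrableOn g (Ioc l r) :=
  IntegrableOn.of_bound measure_Ioc_lt_top
    (aemeasurable_restrict_of_monotoneOn measurableSet_Ioc hg).aestronglyMeasurable (max |lo| |hi|)
    (ae_restrict_of_forall_mem measurableSet_Ioc fun _ hu ↦
      abs_le_max_abs_abs (hb hu).1 (hb hu).2)

theorem setIntegral_Ioc_le_of_abs_le {f : ℝ → ℝ} {C : ℝ} (hlr : l ≤ r)
    (hf : ∀ u ∈ Ioc l r, |f u| ≤ C) : ∫ u in Ioc l r, f u ≤ C * (r - l) :=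
  calc ∫ u in Ioc l r, f u ≤ ‖∫ u in Ioc l r, f u‖ := le_abs_self _
    _ ≤ C * volume.real (Ioc l r) := norm_setIntegral_le_of_norm_le_const measure_Ioc_lt_top hf
    _ = C * (r - l) := by rw [Real.volume_real_Ioc_of_le hlr]

theorem setIntegral_abs_sub_midpoint_le (hlr : l < r) (hg : MonotoneOn g (Ioc l r))
    (hb : MapsTo g (Ioc l r) (Icc lo hi)) :
    ∫ u in Ioc l r, |g ((l + r) / 2) - g u| ≤ (r - l) / 2 * (hi - lo) := by
  set m := (l + r) / 2 with hm_def
  have hm : m ∈ Ioc l r := ⟨by linarith, by linarith⟩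
  have hint : IntegrableOn (fun u ↦ |g m - g u|) (Ioc l r) :=
    ((integrableOn_const measure_Ioc_lt_top.ne).sub (hg.integrableOn_Ioc hb)).abs
  have hleft : ∫ u in Ioc l m, |g m - g u| ≤ (g m - lo) * (m - l) :=
    setIntegral_Ioc_le_of_abs_le hm.1.le fun u hu ↦ by
      have hu' : u ∈ Ioc l r := ⟨hu.1, hu.2.trans hm.2⟩
      rw [abs_abs, abs_of_nonneg (sub_nonneg.2 (hg hu' hm hu.2))]
      linarith [(hb hu').1]
  have hright : ∫ u in Ioc m r, |g m - g u| ≤ (hi - g m) * (r - m) :=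
    setIntegral_Ioc_le_of_abs_le hm.2 fun u hu ↦ by
      have hu' : u ∈ Ioc l r := ⟨hm.1.trans hu.1, hu.2⟩
      rw [abs_abs, abs_of_nonpos (sub_nonpos.2 (hg hm hu' hu.1.le))]
      linarith [(hb hu').2]
  rw [← Ioc_union_Ioc_eq_Ioc hm.1.le hm.2, setIntegral_union (Ioc_disjoint_Ioc_of_le le_rfl)
    measurableSet_Ioc (hint.mono_set (Ioc_subset_Ioc_right hm.2))
    (hint.mono_set (Ioc_subset_Ioc_left hm.1.le))]
  calc _ ≤ (g m - lo) * (m - l) + (hi - g m) * (r - m) := add_le_add hleft hright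
    _ = (r - l) / 2 * (hi - lo) := by rw [hm_def]; ring

end MonotoneMidpoint

section MidpointSteps

variable {g : ℝ → ℝ} {a b : ℝ} {N : ℕ}

theorem sum_setIntegral_abs_sub_midpoint_le (hg : MonotoneOn g (Ioc 0 1))
    (hb : MapsTo g (Ioc 0 1) (Icc a b)) (hN : 0 < N) :
    ∑ i ∈ Finset.range N, ∫ u in Ioc ((i : ℝ) / N) ((i + 1) / N),
      |g ((2 * i + 1) / (2 * N)) - g u| ≤ (b - a) / (2 * N) := by
  have hNr : (0 : ℝ) < N := by exact_mod_cast hN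
  -- `g 0` is not controlled by the hypotheses, so the telescoping starts at `a` instead.
  set t : ℕ → ℝ := fun k ↦ if k = 0 then a else g (k / N) with ht
  have hbound : ∀ i < N, MapsTo g (Ioc ((i : ℝ) / N) ((i + 1) / N)) (Icc (t i) (t (i + 1))) := by
    intro i hi u hu
    have hu01 := Ioc_div_natCast_subset_Ioc_zero_one hi hu
    have hr01 : ((i : ℝ) + 1) / N ∈ Ioc 0 1 :=
      Ioc_div_natCast_subset_Ioc_zero_one hi (right_mem_Ioc.2 (by gcongr; linarith))
    refine ⟨?_, by simpa [ht] using hg hu01 hr01 hu.2⟩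
    rcases eq_or_ne i 0 with rfl | hi0
    · simpa [ht] using (hb hu01).1
    · have hl01 : (i : ℝ) / N ∈ Ioc 0 1 :=
        ⟨by positivity, div_le_one_of_le₀ (by exact_mod_cast hi.le) hNr.le⟩
      simpa [ht, hi0] using hg hl01 hu01 hu.1.le
  calc _ ≤ ∑ i ∈ Finset.range N, 1 / (2 * N) * (t (i + 1) - t i) := by
        refine Finset.sum_le_sum fun i hi ↦ ?_
        have hi := Finset.mem_range.1 hi
        have hmid : ((i : ℝ) / N + (i + 1) / N) / 2 = (2 * i + 1) / (2 * N) := by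
          field_simp; ring
        have hwidth : (((i : ℝ) + 1) / N - i / N) / 2 = 1 / (2 * N) := by field_simp; ring
        have := setIntegral_abs_sub_midpoint_le (by gcongr; linarith)
          (hg.mono (Ioc_div_natCast_subset_Ioc_zero_one hi)) (hbound i hi)
        rwa [hmid, hwidth] at this
    _ = (t N - t 0) / (2 * N) := by rw [← Finset.mul_sum, Finset.sum_range_sub]; ring
    _ ≤ (b - a) / (2 * N) := by
        rw [show t N = g 1 by simp [ht, hN.ne', hNr.ne'], show t 0 = a by simp [ht]]
        gcongr
        exact (hb ⟨one_pos, le_rfl⟩).2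

theorem integral_abs_sub_le_of_eqOn_midpoint {f : ℝ → ℝ} (hg : MonotoneOn g (Ioc 0 1))
    (hb : MapsTo g (Ioc 0 1) (Icc a b)) (hN : 0 < N)
    (hf : ∀ i < N, EqOn f (fun _ ↦ g ((2 * i + 1) / (2 * N))) (Ioc ((i : ℝ) / N) ((i + 1) / N))) :
    ∫ u in Ioo 0 1, |f u - g u| ≤ (b - a) / (2 * N) := by
  have hNr : (0 : ℝ) < N := by exact_mod_cast hN
  have hpiece : ∀ i < N, EqOn (fun u ↦ |f u - g u|) (fun u ↦ |g ((2 * i + 1) / (2 * N)) - g u|)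
      (Ioc ((i : ℝ) / N) ((i + 1) / N)) := fun i hi u hu ↦ by simp only [hf i hi hu]
  have hint : ∀ i < N, IntervalIntegrable (fun u ↦ |f u - g u|) volume ((i : ℝ) / N)
      (((i + 1 : ℕ) : ℝ) / N) := fun i hi ↦ by
    rw [intervalIntegrable_iff_integrableOn_Ioc_of_le (by gcongr; simp), Nat.cast_succ]
    refine IntegrableOn.congr_fun ?_ (hpiece i hi).symm measurableSet_Ioc
    exact ((integrableOn_const measure_Ioc_lt_top.ne).sub
      ((hg.integrableOn_Ioc hb).mono_set (Ioc_div_natCast_subset_Ioc_zero_one hi))).abs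
  have hsplit := intervalIntegral.sum_integral_adjacent_intervals hint
  simp only [Nat.cast_zero, zero_div, div_self hNr.ne'] at hsplit
  rw [← integral_Ioc_eq_integral_Ioo, ← intervalIntegral.integral_of_le zero_le_one, ← hsplit]
  refine le_of_eq_of_le (Finset.sum_congr rfl fun i hi ↦ ?_)
    (sum_setIntegral_abs_sub_midpoint_le hg hb hN)
  rw [intervalIntegral.integral_of_le (by gcongr; simp), Nat.cast_succ,
    setIntegral_congr_fun measurableSet_Ioc (hpiece i (Finset.mem_range.1 hi))]

end MidpointSteps

theorem quantile_projection_error_bound_general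
    (μ : Measure ℝ) [IsProbabilityMeasure μ]
    (a Δ : ℝ)
    (hsupp : μ (Icc a (a + Δ))ᶜ = 0)
    (N : ℕ) (hN : 0 < N) :
    W1 ((N : ℝ≥0∞)⁻¹ •
        ∑ i ∈ Finset.range N, Measure.dirac (quantile μ ((2 * i + 1) / (2 * N)))) μ
      ≤ Δ / (2 * N) := by
  have hmid : ∀ i < N, ((2 * i + 1) / (2 * N) : ℝ) ∈ Ioc 0 1 := fun i hi ↦
    ⟨by positivity, div_le_one_of_le₀ (by norm_cast; omega) (by positivity)⟩
  have hatoms : MonotoneOn (fun i : ℕ ↦ quantile μ ((2 * i + 1) / (2 * N))) (Iio N) :=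
    fun i hi j hj hij ↦ quantile_monotoneOn hsupp (hmid i hi) (hmid j hj) (by gcongr)
  calc _ ≤ (a + Δ - a) / (2 * N) :=
        integral_abs_sub_le_of_eqOn_midpoint (quantile_monotoneOn hsupp)
          (mapsTo_quantile_Icc hsupp) hN fun i hi ↦ quantile_uniform_sum_dirac hatoms hi
    _ = Δ / (2 * N) := by ring

/-- Quantile projection error bound: for `μ` supported on an interval of length
`Δ`, the quantile projection with `N` atoms at the `(2i+1)/(2N)`-quantiles
satisfies `W₁(Π_Q μ, μ) ≤ Δ/(2N)`. -/
theorem quantile_projection_error_bound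
    (μ : Measure ℝ) [IsProbabilityMeasure μ]
    (a Δ : ℝ) (hΔ : 0 ≤ Δ)
    (hsupp : μ (Icc a (a + Δ))ᶜ = 0)
    (N : ℕ) (hN : 0 < N) :
    W1 ((N : ℝ≥0∞)⁻¹ •
        ∑ i ∈ Finset.range N, Measure.dirac (quantile μ ((2 * i + 1) / (2 * N)))) μ
      ≤ Δ / (2 * N) :=
  quantile_projection_error_bound_general μ a Δ hsupp N hN
end

section
/- Fix N ∈ ℕ, N ≥ 2, Δ > 0, and set z_i = iΔ/N for 0 ≤ i ≤ N. Let μ = (1/(2N))·Σ_{i=0}^{N−1}(δ_{z_i} + δ_{z_{i+1}}), a probability measure supported on [0, Δ]. Then the quantile projection Π_Q μ = (1/N)·Σ_{i=0}^{N−1} δ_{z_i} satisfies W₁(μ, Π_Q μ) = Δ/(2N). -/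
open MeasureTheory Set
open scoped ENNReal

/-!
Write both measures with `2N` atoms of mass `1/(2N)` listed in increasing order, using
`y j = ⌊j/2⌋ Δ/N`: the projection is `y 0, …, y (2N-1)` and `μ` is the shifted list
`y 1, …, y (2N)`. Quantile functions of such measures are step functions on the cells
`(j/(2N), (j+1)/(2N)]`, so `W₁` is the average of `y (j+1) - y j`, which telescopes to
`(y (2N) - y 0)/(2N) = Δ/(2N)`.
-/

open Finset
open scoped Interval

lemma Finset.sum_range_two_mul_eq_sum_pairs {M : Type*} [AddCommMonoid M] (f : ℕ → M) (n : ℕ) :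
    ∑ j ∈ range (2 * n), f j = ∑ i ∈ range n, (f (2 * i) + f (2 * i + 1)) := by
  induction n with
  | zero => simp
  | succ n ih => rw [Nat.mul_succ, sum_range_succ, sum_range_succ, add_assoc, ih, sum_range_succ]

noncomputable def empiricalMeasure (M : ℕ) (x : ℕ → ℝ) : Measure ℝ :=
  (M : ℝ≥0∞)⁻¹ • ∑ j ∈ range M, Measure.dirac (x j)

lemma cdf_empiricalMeasure (M : ℕ) (x : ℕ → ℝ) (t : ℝ) :
    cdf (empiricalMeasure M x) t = #{j ∈ range M | x j ≤ t} / M := by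
  simp [cdf, empiricalMeasure, Measure.finsetSum_apply, Measure.dirac_apply' _ measurableSet_Iic,
    Set.indicator_apply, div_eq_inv_mul]

lemma quantile_empiricalMeasure {M : ℕ} {x : ℕ → ℝ} (hx : Monotone x) {k : ℕ} (hk : k < M)
    {u : ℝ} (hu : u ∈ Ioc ((k : ℝ) / M) (((k + 1 : ℕ) : ℝ) / M)) :
    quantile (empiricalMeasure M x) u = x k := by
  refine IsLeast.csInf_eq ⟨?_, fun t ht => ?_⟩
  · have hcard : k + 1 ≤ #{j ∈ range M | x j ≤ x k} := by
      simpa using Finset.card_le_card (show range (k + 1) ⊆ {j ∈ range M | x j ≤ x k} from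
        fun j hj => by
          simp only [Finset.mem_range, mem_filter] at hj ⊢
          exact ⟨by omega, hx (by omega)⟩)
    rw [Set.mem_ofPred_eq, cdf_empiricalMeasure]
    exact hu.2.trans (by gcongr)
  · by_contra! htk
    have hcard : #{j ∈ range M | x j ≤ t} ≤ k := by
      simpa using Finset.card_le_card (show {j ∈ range M | x j ≤ t} ⊆ range k from
        fun j hj => by
          simp only [Finset.mem_range, mem_filter] at hj ⊢
          by_contra! hkj
          exact (hj.2.trans_lt htk).not_ge (hx hkj))
    rw [Set.mem_ofPred_eq, cdf_empiricalMeasure] at ht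
    have : (#{j ∈ range M | x j ≤ t} : ℝ) / M ≤ k / M := by gcongr
    linarith [hu.1]

theorem W1_empiricalMeasure {M : ℕ} (hM : M ≠ 0) {x y : ℕ → ℝ} (hx : Monotone x)
    (hy : Monotone y) :
    W1 (empiricalMeasure M x) (empiricalMeasure M y) = (∑ j ∈ range M, |x j - y j|) / M := by
  set f := fun u => |quantile (empiricalMeasure M x) u - quantile (empiricalMeasure M y) u|
  have hcell : ∀ k < M, ∀ u ∈ Ι ((k : ℝ) / M) (((k + 1 : ℕ) : ℝ) / M), f u = |x k - y k| := by
    intro k hk u hu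
    rw [uIoc_of_le (by gcongr; omega)] at hu
    simp only [f, quantile_empiricalMeasure hx hk hu, quantile_empiricalMeasure hy hk hu]
  have hint : ∀ k < M, IntervalIntegrable f volume ((k : ℝ) / M) (((k + 1 : ℕ) : ℝ) / M) :=
    fun k hk => intervalIntegrable_const.congr fun u hu => (hcell k hk u hu).symm
  calc W1 (empiricalMeasure M x) (empiricalMeasure M y) = ∫ u in (0 : ℝ)..1, f u := by
        rw [W1, intervalIntegral.integral_of_le zero_le_one, setIntegral_congr_set Ioo_ae_eq_Ioc]
    _ = ∑ k ∈ range M, ∫ u in ((k : ℝ) / M)..(((k + 1 : ℕ) : ℝ) / M), f u := by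
        rw [intervalIntegral.sum_integral_adjacent_intervals hint]
        simp [hM]
    _ = ∑ k ∈ range M, |x k - y k| / M := by
        refine sum_congr rfl fun k hk => ?_
        rw [intervalIntegral.integral_congr_ae (ae_of_all _ (hcell k (Finset.mem_range.1 hk))),
          intervalIntegral.integral_const, smul_eq_mul]
        field_simp
        push_cast
        ring
    _ = _ := (sum_div _ _ _).symm

lemma empiricalMeasure_two_mul (n : ℕ) (x : ℕ → ℝ) :
    empiricalMeasure (2 * n) x =
      (2 * (n : ℝ≥0∞))⁻¹ •
        ∑ i ∈ range n, (Measure.dirac (x (2 * i)) + Measure.dirac (x (2 * i + 1))) := by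
  rw [empiricalMeasure, Finset.sum_range_two_mul_eq_sum_pairs, Nat.cast_mul, Nat.cast_ofNat]

/-- A distribution achieving the worst-case quantile projection error: for
`μ = (1/(2N)) Σᵢ (δ_{zᵢ} + δ_{zᵢ₊₁})` with `zᵢ = iΔ/N`, the quantile projection
`Π_Q μ = (1/N) Σᵢ δ_{zᵢ}` satisfies `W₁(μ, Π_Q μ) = Δ/(2N)`. -/
theorem quantile_projection_error_tight
    (N : ℕ) (hN : 2 ≤ N) (Δ : ℝ) (hΔ : 0 < Δ) :
    W1 ((2 * (N : ℝ≥0∞))⁻¹ •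
          ∑ i ∈ Finset.range N,
            (Measure.dirac ((i : ℝ) * Δ / N) + Measure.dirac (((i : ℝ) + 1) * Δ / N)))
       ((N : ℝ≥0∞)⁻¹ • ∑ i ∈ Finset.range N, Measure.dirac ((i : ℝ) * Δ / N))
      = Δ / (2 * N) := by
  set y : ℕ → ℝ := fun j => ((j / 2 : ℕ) : ℝ) * Δ / N
  have hy : Monotone y := fun i j hij => by dsimp only [y]; gcongr
  have hμ : (2 * (N : ℝ≥0∞))⁻¹ • ∑ i ∈ Finset.range N,
      (Measure.dirac ((i : ℝ) * Δ / N) + Measure.dirac (((i : ℝ) + 1) * Δ / N))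
      = empiricalMeasure (2 * N) (fun j => y (j + 1)) := by
    rw [empiricalMeasure_two_mul]
    refine congrArg _ (sum_congr rfl fun i _ => ?_)
    simp only [y, show (2 * i + 1) / 2 = i by omega, show (2 * i + 1 + 1) / 2 = i + 1 by omega]
    push_cast
    rfl
  have hν : (N : ℝ≥0∞)⁻¹ • ∑ i ∈ Finset.range N, Measure.dirac ((i : ℝ) * Δ / N)
      = empiricalMeasure (2 * N) y := by
    rw [empiricalMeasure_two_mul]
    simp only [y, show ∀ i, 2 * i / 2 = i by omega, show ∀ i, (2 * i + 1) / 2 = i by omega,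
      ← two_smul ℝ≥0∞, ← smul_sum, smul_smul]
    rw [ENNReal.mul_inv (by simp) (by simp), mul_comm _ 2, ← mul_assoc,
      ENNReal.mul_inv_cancel (by simp) (by simp), one_mul]
  rw [hμ, hν, W1_empiricalMeasure (by omega) (fun i j hij => hy (by omega)) hy]
  have hy_top : y (2 * N) = Δ := by simp [y, field]
  simp_rw [abs_of_nonneg (sub_nonneg.2 (hy (Nat.le_succ _)))]
  rw [sum_range_sub, hy_top]
  simp [y]
end
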